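/- arXiv:1804.07025 — 2 statements merged into one kernel-verified Lean document; each statement's English description precedes it below -/
import Mathlib

section
/- The limit as α → N⁻ of (α - N)/γ(α) equals -2/(π^{N/2}·2^N·Γ(N/2)), where γ(α) = π^{N/2} 2^α Γ(α/2)/Γ((N-α)/2). -/
open Real Filter

noncomputable section

/-- The Riesz potential normalization constant
`γ(α) = π^(N/2) 2^α Γ(α/2) / Γ((N-α)/2)`. -/
def rieszGamma (N : ℕ) (α : ℝ) : ℝ :=
  Real.pi ^ ((N : ℝ) / 2) * 2 ^ α * Real.Gamma (α / 2) / Real.Gamma (((N : ℝ) - α) / 2)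

open Topology

namespace Real

theorem continuousAt_Gamma_of_pos {s : ℝ} (hs : 0 < s) : ContinuousAt Gamma s :=
  (differentiableOn_Gamma_Ioi.differentiableAt (Ioi_mem_nhds hs)).continuousAt

/-- `t Γ(t) = Γ(t + 1)`, which is continuous at `0`. -/
theorem tendsto_self_mul_Gamma_nhdsNE_zero :
    Tendsto (fun t : ℝ => t * Gamma t) (𝓝[≠] 0) (𝓝 1) := by
  have hcont : Tendsto (fun t : ℝ => Gamma (t + 1)) (𝓝 0) (𝓝 1) := by
    simpa only [Gamma_one, Function.comp_def] using
      (continuousAt_Gamma_of_pos one_pos).tendsto.comp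
        ((continuous_add_const (1 : ℝ)).tendsto' 0 1 (zero_add 1))
  refine (hcont.mono_left nhdsWithin_le_nhds).congr' ?_
  filter_upwards [self_mem_nhdsWithin] with t ht
  exact Gamma_add_one ht

theorem tendsto_sub_mul_Gamma_half_sub (a : ℝ) :
    Tendsto (fun α : ℝ => (α - a) * Gamma ((a - α) / 2)) (𝓝[≠] a) (𝓝 (-2)) := by
  have hmap : Tendsto (fun α : ℝ => (a - α) / 2) (𝓝[≠] a) (𝓝[≠] 0) := by
    refine tendsto_nhdsWithin_of_tendsto_nhds_of_eventually_within _ ?_ ?_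
    · have : Continuous fun α : ℝ => (a - α) / 2 := by fun_prop
      simpa using (this.tendsto a).mono_left nhdsWithin_le_nhds
    · filter_upwards [self_mem_nhdsWithin] with α hα
      exact div_ne_zero (sub_ne_zero.mpr (Ne.symm hα)) two_ne_zero
  have := (tendsto_self_mul_Gamma_nhdsNE_zero.comp hmap).const_mul (-2)
  rw [mul_one] at this
  refine this.congr fun α => ?_
  simp only [Function.comp_apply]
  ring

end Real

theorem sub_div_rieszGamma (N : ℕ) (α : ℝ) :
    (α - N) / rieszGamma N α =
      (α - N) * Gamma ((N - α) / 2) / (π ^ ((N : ℝ) / 2) * 2 ^ α * Gamma (α / 2)) :=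
  div_div_eq_mul_div _ _ _

theorem limit_gamma_at_N (N : ℕ) (hN : 1 ≤ N) :
    Tendsto (fun α : ℝ => (α - (N : ℝ)) / rieszGamma N α)
      (nhdsWithin (N : ℝ) (Set.Iio (N : ℝ)))
      (nhds (-2 / (Real.pi ^ ((N : ℝ) / 2) * 2 ^ (N : ℕ) * Real.Gamma ((N : ℝ) / 2)))) := by
  have hN_half : (0 : ℝ) < N / 2 := div_pos (Nat.cast_pos.mpr hN) two_pos
  have hden :
      Tendsto (fun α : ℝ => π ^ ((N : ℝ) / 2) * 2 ^ α * Gamma (α / 2)) (𝓝 (N : ℝ))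
      (𝓝 (π ^ ((N : ℝ) / 2) * 2 ^ (N : ℝ) * Gamma ((N : ℝ) / 2))) := by
    have hΓ := (continuousAt_Gamma_of_pos hN_half).comp (f := fun α : ℝ => α / 2)
      (continuous_id.div_const 2).continuousAt
    exact (continuousAt_const.mul (continuousAt_const_rpow two_ne_zero)).mul hΓ
  have hden_ne : π ^ ((N : ℝ) / 2) * 2 ^ N * Gamma ((N : ℝ) / 2) ≠ 0 := by
    have := Gamma_pos_of_pos hN_half
    positivity
  rw [rpow_natCast] at hden
  refine (((tendsto_sub_mul_Gamma_half_sub N).mono_left (nhdsLT_le_nhdsNE _)).div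
    (hden.mono_left nhdsWithin_le_nhds) hden_ne).congr fun α => (sub_div_rieszGamma N α).symm
end
end

section
/- Let N ≥ 3 and k ∈ ℕ with 1 ≤ k ≤ N. The function F(x) := (-1)^k div_k(|x|^{2k-N} ∇^k log|x|), defined for x ≠ 0, is identically zero on ℝ^N \ {0}; equivalently, the smooth function x ↦ ∑_{i_1,...,i_k} ∂^k/∂x_{i_1}...∂x_{i_k} (|x|^{2k-N} ∂^k log|x|/∂x_{i_1}...∂x_{i_k}) vanishes for all x ≠ 0. -/
/-!
Write `r = ‖x‖`, `n` for the dimension, `E f = x · ∇f` for the Euler operator and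
`T_k(p, f) = div_k (r^p ∇^k f)`. Splitting off the last index, the product rule with
`∇ r^p = p r^(p-2) x` and the commutation `∂_L (E f) = E (∂_L f) + |L| ∂_L f` give
`T_(m+1)(p, f) = T_m(p, Δf) + p T_m(p-2, E f) - p m T_m(p-2, f)`.
Since `Δ r^q = q (q+n-2) r^(q-2)` and `E r^q = q r^q`, induction on `m` gives
`T_(m+1)(p, r^q) = 0` whenever `p + q + n = 2(m+1)`. Since `Δ log r = (n-2) r^(-2)` and
`E log r = 1`, a constant, which `T_(m+1)` kills, a second induction gives
`T_(m+1)(2(m+1) - n, log r) = 0`.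
-/

open Real

noncomputable section

/-- The iterated mixed partial derivative `∂^k f/∂x_{i 0} ⋯ ∂x_{i (k-1)}` at `x`. -/
def pD {N : ℕ} (k : ℕ) (f : EuclideanSpace ℝ (Fin N) → ℝ) (i : Fin k → Fin N)
    (x : EuclideanSpace ℝ (Fin N)) : ℝ :=
  iteratedFDeriv ℝ k f x (fun j => EuclideanSpace.single (i j) 1)

open Set
open scoped ContDiff RealInnerProductSpace Laplacian

section DirDeriv

variable {F : Type*} [NormedAddCommGroup F] [NormedSpace ℝ F]

def dirDeriv (v : F) (f : F → ℝ) (x : F) : ℝ := fderiv ℝ f x v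

def iterDirDeriv : List F → (F → ℝ) → F → ℝ
  | [], f => f
  | v :: L, f => dirDeriv v (iterDirDeriv L f)

def euler (f : F → ℝ) (x : F) : ℝ := fderiv ℝ f x x

variable {s : Set F} {f g : F → ℝ} {x : F}

theorem HasFDerivAt.dirDeriv_eq {f' : F →L[ℝ] ℝ} (hf : HasFDerivAt f f' x) (v : F) :
    dirDeriv v f x = f' v := by
  rw [dirDeriv, hf.fderiv]

theorem ContDiffAt.dirDeriv {n : WithTop ℕ∞} (hf : ContDiffAt ℝ (n + 1) f x) (v : F) :
    ContDiffAt ℝ n (dirDeriv v f) x :=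
  (hf.fderiv_right le_rfl).clm_apply contDiffAt_const

theorem ContDiffOn.dirDeriv (hs : IsOpen s) (hf : ContDiffOn ℝ ∞ f s) (v : F) :
    ContDiffOn ℝ ∞ (dirDeriv v f) s :=
  ((contDiffOn_infty_iff_fderiv_of_isOpen hs).1 hf).2.clm_apply contDiffOn_const

theorem ContDiffOn.iterDirDeriv (hs : IsOpen s) (hf : ContDiffOn ℝ ∞ f s) :
    ∀ L : List F, ContDiffOn ℝ ∞ (iterDirDeriv L f) s
  | [] => hf
  | v :: L => (hf.iterDirDeriv hs L).dirDeriv hs v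

theorem ContDiffOn.differentiableAt (hs : IsOpen s) (hf : ContDiffOn ℝ ∞ f s) (hx : x ∈ s) :
    DifferentiableAt ℝ f x :=
  (hf.contDiffAt (hs.mem_nhds hx)).differentiableAt (by simp)

theorem ContDiffOn.contDiffAt_two (hs : IsOpen s) (hf : ContDiffOn ℝ ∞ f s) (hx : x ∈ s) :
    ContDiffAt ℝ 2 f x :=
  (hf.contDiffAt (hs.mem_nhds hx)).of_le ENat.LEInfty.out

theorem ContDiffOn.euler (hs : IsOpen s) (hf : ContDiffOn ℝ ∞ f s) :
    ContDiffOn ℝ ∞ (euler f) s :=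
  ((contDiffOn_infty_iff_fderiv_of_isOpen hs).1 hf).2.clm_apply contDiffOn_id

theorem iterDirDeriv_append_singleton (L : List F) (v : F) (f : F → ℝ) :
    iterDirDeriv (L ++ [v]) f = iterDirDeriv L (dirDeriv v f) := by
  induction L with
  | nil => rfl
  | cons w L ih => simp only [List.cons_append, iterDirDeriv, ih]

theorem dirDeriv_const (v : F) (c : ℝ) : dirDeriv v (fun _ => c) = fun _ => 0 := by
  ext x
  simp [dirDeriv]

theorem iterDirDeriv_const {L : List F} (hL : L ≠ []) (c : ℝ) :
    iterDirDeriv L (fun _ => c) = fun _ => 0 := by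
  induction L with
  | nil => exact absurd rfl hL
  | cons v L ih =>
    rcases eq_or_ne L [] with rfl | hL'
    · exact dirDeriv_const v c
    · simp only [iterDirDeriv, ih hL', dirDeriv_const]

theorem dirDeriv_mul (hf : DifferentiableAt ℝ f x) (hg : DifferentiableAt ℝ g x) (v : F) :
    dirDeriv v (fun y => f y * g y) x = dirDeriv v f x * g x + f x * dirDeriv v g x := by
  rw [(hf.hasFDerivAt.fun_mul hg.hasFDerivAt).dirDeriv_eq, dirDeriv, dirDeriv]
  simp only [add_apply, smul_apply, smul_eq_mul]
  ring

theorem dirDeriv_add (hf : DifferentiableAt ℝ f x) (hg : DifferentiableAt ℝ g x) (v : F) :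
    dirDeriv v (fun y => f y + g y) x = dirDeriv v f x + dirDeriv v g x :=
  (hf.hasFDerivAt.fun_add hg.hasFDerivAt).dirDeriv_eq v

theorem dirDeriv_const_mul (hf : DifferentiableAt ℝ f x) (c : ℝ) (v : F) :
    dirDeriv v (fun y => c * f y) x = c * dirDeriv v f x :=
  (hf.hasFDerivAt.const_mul c).dirDeriv_eq v

theorem dirDeriv_congr (hs : IsOpen s) (hfg : EqOn f g s) (v : F) :
    EqOn (dirDeriv v f) (dirDeriv v g) s := fun x hx => by
  rw [dirDeriv, dirDeriv, (hfg.eventuallyEq_of_mem (hs.mem_nhds hx)).fderiv_eq]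

theorem iterDirDeriv_congr (hs : IsOpen s) (hfg : EqOn f g s) :
    ∀ L : List F, EqOn (iterDirDeriv L f) (iterDirDeriv L g) s
  | [] => hfg
  | v :: L => dirDeriv_congr hs (iterDirDeriv_congr hs hfg L) v

theorem iterDirDeriv_add (hs : IsOpen s) (hf : ContDiffOn ℝ ∞ f s) (hg : ContDiffOn ℝ ∞ g s)
    (L : List F) (hx : x ∈ s) :
    iterDirDeriv L (fun y => f y + g y) x = iterDirDeriv L f x + iterDirDeriv L g x := by
  induction L generalizing x with
  | nil => rfl
  | cons v L ih =>
    rw [iterDirDeriv, dirDeriv_congr hs (fun y hy => ih hy) v hx,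
      dirDeriv_add ((hf.iterDirDeriv hs L).differentiableAt hs hx)
        ((hg.iterDirDeriv hs L).differentiableAt hs hx)]
    rfl

theorem iterDirDeriv_const_mul (hs : IsOpen s) (hf : ContDiffOn ℝ ∞ f s) (c : ℝ) (L : List F)
    (hx : x ∈ s) : iterDirDeriv L (fun y => c * f y) x = c * iterDirDeriv L f x := by
  induction L generalizing x with
  | nil => rfl
  | cons v L ih =>
    rw [iterDirDeriv, dirDeriv_congr hs (fun y hy => ih hy) v hx,
      dirDeriv_const_mul ((hf.iterDirDeriv hs L).differentiableAt hs hx)]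
    rfl

theorem iterDirDeriv_sum {ι : Type*} (t : Finset ι) {f : ι → F → ℝ} (hs : IsOpen s)
    (hf : ∀ i ∈ t, ContDiffOn ℝ ∞ (f i) s) (L : List F) (hx : x ∈ s) :
    iterDirDeriv L (fun y => ∑ i ∈ t, f i y) x = ∑ i ∈ t, iterDirDeriv L (f i) x := by
  induction L generalizing x with
  | nil => rfl
  | cons v L ih =>
    rw [iterDirDeriv, dirDeriv_congr hs (fun y hy => ih hy) v hx, dirDeriv,
      fderiv_fun_sum fun i hi => ((hf i hi).iterDirDeriv hs L).differentiableAt hs hx]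
    simp [iterDirDeriv, dirDeriv]

theorem dirDeriv_dirDeriv (hf : ContDiffAt ℝ 2 f x) (v w : F) :
    dirDeriv v (dirDeriv w f) x = fderiv ℝ (fderiv ℝ f) x v w := by
  have hd : DifferentiableAt ℝ (fderiv ℝ f) x :=
    (hf.fderiv_right (m := 1) le_rfl).differentiableAt one_ne_zero
  change fderiv ℝ (fun y => fderiv ℝ f y w) x v = _
  simp [fderiv_clm_apply hd (differentiableAt_const w)]

theorem dirDeriv_comm (hf : ContDiffAt ℝ 2 f x) (v w : F) :
    dirDeriv v (dirDeriv w f) x = dirDeriv w (dirDeriv v f) x := by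
  rw [dirDeriv_dirDeriv hf, dirDeriv_dirDeriv hf, hf.isSymmSndFDerivAt (by simp) v w]

theorem dirDeriv_iterDirDeriv_comm (hs : IsOpen s) (hf : ContDiffOn ℝ ∞ f s) (v : F) :
    ∀ L : List F, EqOn (dirDeriv v (iterDirDeriv L f)) (iterDirDeriv L (dirDeriv v f)) s
  | [] => fun _ _ => rfl
  | w :: L => fun x hx => by
    rw [iterDirDeriv, iterDirDeriv, dirDeriv_comm ((hf.iterDirDeriv hs L).contDiffAt_two hs hx),
      dirDeriv_congr hs (dirDeriv_iterDirDeriv_comm hs hf v L) w hx]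

theorem dirDeriv_euler (hf : ContDiffAt ℝ 2 f x) (v : F) :
    dirDeriv v (euler f) x = euler (dirDeriv v f) x + dirDeriv v f x := by
  have hd : DifferentiableAt ℝ (fderiv ℝ f) x :=
    (hf.fderiv_right (m := 1) le_rfl).differentiableAt one_ne_zero
  change fderiv ℝ (fun y => fderiv ℝ f y (id y)) x v = dirDeriv x (dirDeriv v f) x + _
  rw [dirDeriv_dirDeriv hf, hf.isSymmSndFDerivAt (by simp),
    (hd.hasFDerivAt.clm_apply (hasFDerivAt_id x)).fderiv]
  simp [dirDeriv, add_comm]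

theorem iterDirDeriv_euler (hs : IsOpen s) (hf : ContDiffOn ℝ ∞ f s) (L : List F) (hx : x ∈ s) :
    iterDirDeriv L (euler f) x = euler (iterDirDeriv L f) x + L.length * iterDirDeriv L f x := by
  induction L generalizing x with
  | nil => simp [iterDirDeriv]
  | cons v L ih =>
    have hL := hf.iterDirDeriv hs L
    rw [iterDirDeriv, dirDeriv_congr hs (fun y hy => ih hy) v hx,
      dirDeriv_add ((hL.euler hs).differentiableAt hs hx)
        ((hL.differentiableAt hs hx).const_mul _),
      dirDeriv_const_mul (hL.differentiableAt hs hx), dirDeriv_euler (hL.contDiffAt_two hs hx)]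
    simp only [iterDirDeriv, List.length_cons]
    push_cast
    ring

theorem iteratedFDeriv_eq_iterDirDeriv (hs : IsOpen s) (hf : ContDiffOn ℝ ∞ f s) :
    ∀ {k : ℕ} (v : Fin k → F),
      EqOn (fun x => iteratedFDeriv ℝ k f x v) (iterDirDeriv (List.ofFn v) f) s
  | 0, v => fun x _ => by simp [iterDirDeriv]
  | k + 1, v => fun x hx => by
    have hd : DifferentiableAt ℝ (iteratedFDeriv ℝ k f) x :=
      ((hf.contDiffAt (hs.mem_nhds hx)).iteratedFDeriv_right (m := 1)
        (by exact_mod_cast le_top)).differentiableAt one_ne_zero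
    simp only [iteratedFDeriv_succ_apply_left, List.ofFn_succ, iterDirDeriv]
    rw [← fderiv_continuousMultilinear_apply_const_apply hd]
    exact dirDeriv_congr hs (iteratedFDeriv_eq_iterDirDeriv hs hf (Fin.tail v)) (v 0) hx

end DirDeriv

theorem Real.rpow_sub_two_mul_sq {r : ℝ} (hr : 0 < r) (p : ℝ) : r ^ (p - 2) * r ^ 2 = r ^ p := by
  rw [← rpow_natCast, ← rpow_add hr]
  norm_num

section Radial

variable {E : Type*} [NormedAddCommGroup E] [InnerProductSpace ℝ E] {x : E}

theorem hasFDerivAt_norm_rpow_of_ne_zero (hx : x ≠ 0) (p : ℝ) :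
    HasFDerivAt (fun y : E => ‖y‖ ^ p) ((p * ‖x‖ ^ (p - 2)) • innerSL ℝ x) x := by
  have hsq (y : E) (q : ℝ) : (‖y‖ ^ 2) ^ (q / 2) = ‖y‖ ^ q := by
    rw [← rpow_natCast, ← rpow_mul (norm_nonneg y)]
    ring_nf
  have h := (hasStrictFDerivAt_norm_sq x).hasFDerivAt.rpow_const (p := p / 2)
    (.inl (by positivity))
  simp only [show p / 2 - 1 = (p - 2) / 2 by ring, hsq] at h
  convert h using 1
  ext v
  simp only [smul_apply, innerSL_apply_apply, nsmul_eq_mul, smul_eq_mul]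
  ring

theorem hasFDerivAt_log_norm (hx : x ≠ 0) :
    HasFDerivAt (fun y : E => log ‖y‖) (‖x‖ ^ (-2 : ℝ) • innerSL ℝ x) x := by
  have h := (hasFDerivAt_norm_rpow_of_ne_zero hx 1).log (by simpa using hx)
  simp only [rpow_one, smul_smul] at h
  convert h using 2
  rw [one_mul, ← rpow_neg_one, ← rpow_add (norm_pos_iff.2 hx)]
  norm_num

theorem contDiffAt_norm_rpow {n : WithTop ℕ∞} (hx : x ≠ 0) (p : ℝ) :
    ContDiffAt ℝ n (fun y : E => ‖y‖ ^ p) x :=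
  (contDiffAt_norm ℝ hx).rpow_const_of_ne (norm_ne_zero_iff.2 hx)

theorem contDiffOn_norm_rpow (p : ℝ) : ContDiffOn ℝ ∞ (fun y : E => ‖y‖ ^ p) {0}ᶜ :=
  fun _ hx => (contDiffAt_norm_rpow hx p).contDiffWithinAt

theorem contDiffOn_log_norm : ContDiffOn ℝ ∞ (fun y : E => log ‖y‖) {0}ᶜ :=
  fun _ hx => ((contDiffAt_norm ℝ hx).log (norm_ne_zero_iff.2 hx)).contDiffWithinAt

theorem hasFDerivAt_inner_const (w x : E) :
    HasFDerivAt (fun y : E => ⟪y, w⟫) (innerSL ℝ w) x := by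
  convert (innerSL ℝ w).hasFDerivAt using 1
  ext y
  simp [real_inner_comm]

theorem dirDeriv_norm_rpow (hx : x ≠ 0) (p : ℝ) (v : E) :
    dirDeriv v (fun y : E => ‖y‖ ^ p) x = p * (‖x‖ ^ (p - 2) * ⟪x, v⟫) := by
  rw [(hasFDerivAt_norm_rpow_of_ne_zero hx p).dirDeriv_eq]
  simp [mul_assoc]

theorem dirDeriv_log_norm (hx : x ≠ 0) (v : E) :
    dirDeriv v (fun y : E => log ‖y‖) x = ‖x‖ ^ (-2 : ℝ) * ⟪x, v⟫ := by
  rw [(hasFDerivAt_log_norm hx).dirDeriv_eq]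
  simp

theorem euler_norm_rpow (hx : x ≠ 0) (p : ℝ) : euler (fun y : E => ‖y‖ ^ p) x = p * ‖x‖ ^ p := by
  rw [euler, ← dirDeriv, dirDeriv_norm_rpow hx, real_inner_self_eq_norm_sq,
    rpow_sub_two_mul_sq (norm_pos_iff.2 hx)]

theorem euler_log_norm (hx : x ≠ 0) : euler (fun y : E => log ‖y‖) x = 1 := by
  rw [euler, ← dirDeriv, dirDeriv_log_norm hx, real_inner_self_eq_norm_sq, ← rpow_natCast,
    ← rpow_add (norm_pos_iff.2 hx)]
  norm_num

end Radial

section OrthonormalBasis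

open Finset

variable {E : Type*} [NormedAddCommGroup E] [InnerProductSpace ℝ E]
  {ι : Type*} [Fintype ι] (b : OrthonormalBasis ι ℝ E) {s : Set E} {f h : E → ℝ} {x : E}

theorem euler_eq_sum_inner_mul_dirDeriv (f : E → ℝ) (x : E) :
    euler f x = ∑ i, ⟪x, b i⟫ * dirDeriv (b i) f x := by
  calc euler f x = fderiv ℝ f x (∑ i, ⟪b i, x⟫ • b i) := by rw [b.sum_repr']; rfl
    _ = _ := by simp [dirDeriv, real_inner_comm]

theorem sum_dirDeriv_norm_rpow_mul_inner (hx : x ≠ 0) (q : ℝ) :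
    ∑ i, dirDeriv (b i) (fun y => ‖y‖ ^ q * ⟪y, b i⟫) x = (q + Fintype.card ι) * ‖x‖ ^ q := by
  have hterm : ∀ i, dirDeriv (b i) (fun y => ‖y‖ ^ q * ⟪y, b i⟫) x
      = q * ‖x‖ ^ (q - 2) * ⟪x, b i⟫ ^ 2 + ‖x‖ ^ q := fun i => by
    rw [dirDeriv_mul (hasFDerivAt_norm_rpow_of_ne_zero hx q).differentiableAt
      (hasFDerivAt_inner_const _ x).differentiableAt, dirDeriv_norm_rpow hx,
      (hasFDerivAt_inner_const _ x).dirDeriv_eq, innerSL_apply_apply, real_inner_self_eq_norm_sq,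
      b.norm_eq_one]
    ring
  rw [sum_congr rfl fun i _ => hterm i, sum_add_distrib, ← mul_sum, b.sum_sq_inner_left, mul_assoc,
    rpow_sub_two_mul_sq (norm_pos_iff.2 hx), sum_const, card_univ, nsmul_eq_mul]
  ring

variable [FiniteDimensional ℝ E]

theorem laplacian_eq_sum_dirDeriv (hf : ContDiffAt ℝ 2 f x) :
    Δ f x = ∑ i, dirDeriv (b i) (dirDeriv (b i) f) x := by
  simp [InnerProductSpace.laplacian_eq_iteratedFDeriv_orthonormalBasis f b,
    iteratedFDeriv_two_apply, dirDeriv_dirDeriv hf]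

theorem ContDiffOn.laplacian (hs : IsOpen s) (hf : ContDiffOn ℝ ∞ f s) :
    ContDiffOn ℝ ∞ (Δ f) s :=
  (ContDiffOn.sum fun _ _ => (hf.dirDeriv hs _).dirDeriv hs _).congr fun _ hy =>
    laplacian_eq_sum_dirDeriv (stdOrthonormalBasis ℝ E) (hf.contDiffAt_two hs hy)

theorem laplacian_iterDirDeriv (hs : IsOpen s) (hf : ContDiffOn ℝ ∞ f s) (L : List E) :
    EqOn (Δ (iterDirDeriv L f)) (iterDirDeriv L (Δ f)) s := fun x hx => by
  let b := stdOrthonormalBasis ℝ E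
  have hcomm : ∀ i, dirDeriv (b i) (dirDeriv (b i) (iterDirDeriv L f)) x
      = iterDirDeriv L (dirDeriv (b i) (dirDeriv (b i) f)) x := fun i => by
    rw [dirDeriv_congr hs (dirDeriv_iterDirDeriv_comm hs hf (b i) L) (b i) hx,
      dirDeriv_iterDirDeriv_comm hs (hf.dirDeriv hs (b i)) (b i) L hx]
  rw [laplacian_eq_sum_dirDeriv b ((hf.iterDirDeriv hs L).contDiffAt_two hs hx),
    sum_congr rfl fun i _ => hcomm i,
    ← iterDirDeriv_sum _ hs (fun i _ => (hf.dirDeriv hs _).dirDeriv hs _) L hx]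
  exact iterDirDeriv_congr hs
    (fun y hy => (laplacian_eq_sum_dirDeriv b (hf.contDiffAt_two hs hy)).symm) L hx

theorem sum_dirDeriv_norm_rpow_mul_dirDeriv (hx : x ≠ 0) (hh : ContDiffAt ℝ 2 h x) (p : ℝ) :
    ∑ i, dirDeriv (b i) (fun y => ‖y‖ ^ p * dirDeriv (b i) h y) x
      = p * ‖x‖ ^ (p - 2) * euler h x + ‖x‖ ^ p * Δ h x := by
  rw [laplacian_eq_sum_dirDeriv b hh, euler_eq_sum_inner_mul_dirDeriv b, mul_sum, mul_sum,
    ← sum_add_distrib]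
  refine sum_congr rfl fun i _ => ?_
  rw [dirDeriv_mul (hasFDerivAt_norm_rpow_of_ne_zero hx p).differentiableAt
    ((hh.dirDeriv (n := 1) (b i)).differentiableAt one_ne_zero), dirDeriv_norm_rpow hx]
  ring

theorem laplacian_norm_rpow (hx : x ≠ 0) (p : ℝ) :
    Δ (fun y : E => ‖y‖ ^ p) x = p * (p - 2 + Module.finrank ℝ E) * ‖x‖ ^ (p - 2) := by
  let b := stdOrthonormalBasis ℝ E
  have hgrad : ∀ i, dirDeriv (b i) (dirDeriv (b i) fun y : E => ‖y‖ ^ p) x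
      = p * dirDeriv (b i) (fun y => ‖y‖ ^ (p - 2) * ⟪y, b i⟫) x := fun i => by
    rw [← dirDeriv_const_mul ((hasFDerivAt_norm_rpow_of_ne_zero hx _).differentiableAt.fun_mul
      (hasFDerivAt_inner_const _ x).differentiableAt)]
    exact dirDeriv_congr isOpen_compl_singleton (fun y hy => dirDeriv_norm_rpow hy p (b i)) (b i)
      hx
  rw [laplacian_eq_sum_dirDeriv b (contDiffAt_norm_rpow hx p), sum_congr rfl fun i _ => hgrad i,
    ← mul_sum, sum_dirDeriv_norm_rpow_mul_inner b hx, Fintype.card_fin]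
  ring

theorem laplacian_log_norm (hx : x ≠ 0) :
    Δ (fun y : E => log ‖y‖) x = (Module.finrank ℝ E - 2) * ‖x‖ ^ (-2 : ℝ) := by
  let b := stdOrthonormalBasis ℝ E
  have hgrad : ∀ i, dirDeriv (b i) (dirDeriv (b i) fun y : E => log ‖y‖) x
      = dirDeriv (b i) (fun y => ‖y‖ ^ (-2 : ℝ) * ⟪y, b i⟫) x := fun i =>
    dirDeriv_congr isOpen_compl_singleton (fun y hy => dirDeriv_log_norm hy (b i)) (b i) hx
  rw [laplacian_eq_sum_dirDeriv b (contDiffOn_log_norm.contDiffAt_two isOpen_compl_singleton hx),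
    sum_congr rfl fun i _ => hgrad i, sum_dirDeriv_norm_rpow_mul_inner b hx, Fintype.card_fin]
  ring

end OrthonormalBasis

theorem Fintype.sum_snoc {α M : Type*} [Fintype α] [AddCommMonoid M] {m : ℕ}
    (F : (Fin (m + 1) → α) → M) : ∑ i, F i = ∑ I : Fin m → α, ∑ a, F (Fin.snoc I a) := by
  rw [← (Fin.snocEquiv fun _ => α).sum_comp, Fintype.sum_prod_type, Finset.sum_comm]
  rfl

theorem List.ofFn_snoc {α : Type*} {m : ℕ} (I : Fin m → α) (a : α) :
    List.ofFn (Fin.snoc I a : Fin (m + 1) → α) = List.ofFn I ++ [a] := by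
  rw [List.ofFn_succ', List.concat_eq_append]
  simp

section Divk

open Finset

variable {E : Type*} [NormedAddCommGroup E] [InnerProductSpace ℝ E] {ι : Type*} [Fintype ι]
  (b : OrthonormalBasis ι ℝ E) {s : Set E} {f f₁ f₂ g : E → ℝ} {x : E}

/-- `div_k (g ∇^k f)`, in the coordinates of the orthonormal basis `b`. -/
def divk (k : ℕ) (g f : E → ℝ) (x : E) : ℝ :=
  ∑ i : Fin k → ι,
    iterDirDeriv ((List.ofFn i).map b) (fun y => g y * iterDirDeriv ((List.ofFn i).map b) f y) x

theorem divk_zero (g f : E → ℝ) (x : E) : divk b 0 g f x = g x * f x := by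
  simp [divk, iterDirDeriv]

theorem divk_congr (hs : IsOpen s) (hf : EqOn f₁ f₂ s) (k : ℕ) (hx : x ∈ s) :
    divk b k g f₁ x = divk b k g f₂ x :=
  sum_congr rfl fun _ _ =>
    iterDirDeriv_congr hs (fun y hy => by simp only [iterDirDeriv_congr hs hf _ hy]) _ hx

theorem divk_const_mul (hs : IsOpen s) (hg : ContDiffOn ℝ ∞ g s) (hf : ContDiffOn ℝ ∞ f s)
    (c : ℝ) (k : ℕ) (hx : x ∈ s) : divk b k g (fun y => c * f y) x = c * divk b k g f x := by
  rw [divk, divk, mul_sum]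
  refine sum_congr rfl fun i _ => ?_
  rw [← iterDirDeriv_const_mul hs (hg.mul (hf.iterDirDeriv hs _)) c _ hx]
  exact iterDirDeriv_congr hs
    (fun y hy => by simp only [iterDirDeriv_const_mul hs hf c _ hy]; ring) _ hx

theorem divk_const {k : ℕ} (hk : k ≠ 0) (g : E → ℝ) (c : ℝ) (x : E) :
    divk b k g (fun _ => c) x = 0 := by
  have hL (i : Fin k → ι) : (List.ofFn i).map b ≠ [] := by simpa using hk
  refine sum_eq_zero fun i _ => ?_
  simp only [iterDirDeriv_const (hL i), mul_zero]

variable [FiniteDimensional ℝ E]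

theorem sum_iterDirDeriv_append_norm_rpow (hf : ContDiffOn ℝ ∞ f {0}ᶜ) (hx : x ≠ 0) (p : ℝ)
    (L : List E) :
    ∑ a, iterDirDeriv (L ++ [b a]) (fun y => ‖y‖ ^ p * iterDirDeriv (L ++ [b a]) f y) x
      = iterDirDeriv L (fun y => ‖y‖ ^ p * iterDirDeriv L (Δ f) y) x
        + p * iterDirDeriv L (fun y => ‖y‖ ^ (p - 2) * iterDirDeriv L (euler f) y) x
        - p * L.length * iterDirDeriv L (fun y => ‖y‖ ^ (p - 2) * iterDirDeriv L f y) x := by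
  have hs : IsOpen ({0}ᶜ : Set E) := isOpen_compl_singleton
  have hweight (q : ℝ) {h : E → ℝ} (hh : ContDiffOn ℝ ∞ h {0}ᶜ) :
      ContDiffOn ℝ ∞ (fun y => ‖y‖ ^ q * h y) {0}ᶜ :=
    (contDiffOn_norm_rpow q).mul hh
  have hA := hweight p ((hf.laplacian hs).iterDirDeriv hs L)
  have hB := hweight (p - 2) ((hf.euler hs).iterDirDeriv hs L)
  have hC := hweight (p - 2) (hf.iterDirDeriv hs L)
  have hdiv : EqOn
      (fun y => ∑ a, dirDeriv (b a) (fun z => ‖z‖ ^ p * iterDirDeriv L (dirDeriv (b a) f) z) y)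
      (fun y => ‖y‖ ^ p * iterDirDeriv L (Δ f) y
        + p * (‖y‖ ^ (p - 2) * iterDirDeriv L (euler f) y)
        + -(p * L.length) * (‖y‖ ^ (p - 2) * iterDirDeriv L f y)) {0}ᶜ := fun y hy => by
    have hcomm (a : ι) : EqOn (fun z => ‖z‖ ^ p * iterDirDeriv L (dirDeriv (b a) f) z)
        (fun z => ‖z‖ ^ p * dirDeriv (b a) (iterDirDeriv L f) z) {0}ᶜ := fun z hz => by
      simp only [dirDeriv_iterDirDeriv_comm hs hf (b a) L hz]
    simp only [sum_congr rfl fun a _ => dirDeriv_congr hs (hcomm a) (b a) hy]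
    rw [sum_dirDeriv_norm_rpow_mul_dirDeriv b hy ((hf.iterDirDeriv hs L).contDiffAt_two hs hy),
      laplacian_iterDirDeriv hs hf L hy, iterDirDeriv_euler hs hf L hy]
    ring
  calc _ = iterDirDeriv L (fun y => ∑ a,
          dirDeriv (b a) (fun z => ‖z‖ ^ p * iterDirDeriv L (dirDeriv (b a) f) z) y) x := by
        simp only [iterDirDeriv_append_singleton]
        exact (iterDirDeriv_sum _ hs (fun a _ =>
          (hweight p ((hf.dirDeriv hs _).iterDirDeriv hs L)).dirDeriv hs _) L hx).symm
    _ = _ := iterDirDeriv_congr hs hdiv L hx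
    _ = _ := by
      rw [iterDirDeriv_add hs (hA.add (contDiffOn_const.mul hB)) (contDiffOn_const.mul hC) L hx,
        iterDirDeriv_add hs hA (contDiffOn_const.mul hB) L hx, iterDirDeriv_const_mul hs hB _ L hx,
        iterDirDeriv_const_mul hs hC _ L hx]
      ring

theorem divk_succ_norm_rpow (hf : ContDiffOn ℝ ∞ f {0}ᶜ) (hx : x ≠ 0) (m : ℕ) (p : ℝ) :
    divk b (m + 1) (fun y => ‖y‖ ^ p) f x
      = divk b m (fun y => ‖y‖ ^ p) (Δ f) x + p * divk b m (fun y => ‖y‖ ^ (p - 2)) (euler f) x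
        - p * m * divk b m (fun y => ‖y‖ ^ (p - 2)) f x := by
  simp only [divk, Fintype.sum_snoc, List.ofFn_snoc, List.map_append, List.map_singleton,
    sum_iterDirDeriv_append_norm_rpow b hf hx, List.length_map, List.length_ofFn, mul_sum,
    ← sum_add_distrib, ← sum_sub_distrib]

theorem divk_norm_rpow_norm_rpow_eq_zero (hx : x ≠ 0) (m : ℕ) {p q : ℝ}
    (hpq : p + q + Module.finrank ℝ E = 2 * (m + 1)) :
    divk b (m + 1) (fun y => ‖y‖ ^ p) (fun y => ‖y‖ ^ q) x = 0 := by
  have hs : IsOpen ({0}ᶜ : Set E) := isOpen_compl_singleton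
  induction m generalizing p q with
  | zero =>
    rw [divk_succ_norm_rpow b (contDiffOn_norm_rpow q) hx, divk_zero, divk_zero, divk_zero,
      laplacian_norm_rpow hx, euler_norm_rpow hx]
    have h1 := rpow_add (norm_pos_iff.2 hx) p (q - 2)
    have h2 := rpow_add (norm_pos_iff.2 hx) (p - 2) q
    rw [show p - 2 + q = p + (q - 2) by ring] at h2
    push_cast at hpq ⊢
    linear_combination (-(q * (q - 2 + Module.finrank ℝ E))) * h1 - (p * q) * h2
      + (q * ‖x‖ ^ (p + (q - 2))) * hpq
  | succ m ih =>
    rw [divk_succ_norm_rpow b (contDiffOn_norm_rpow q) hx,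
      divk_congr b hs (fun y hy => laplacian_norm_rpow hy q) _ hx,
      divk_const_mul b hs (contDiffOn_norm_rpow p) (contDiffOn_norm_rpow (q - 2)) _ _ hx,
      ih (by push_cast at hpq ⊢; linarith),
      divk_congr b hs (fun y hy => euler_norm_rpow hy q) _ hx,
      divk_const_mul b hs (contDiffOn_norm_rpow (p - 2)) (contDiffOn_norm_rpow q) _ _ hx,
      ih (by push_cast at hpq ⊢; linarith)]
    ring

theorem divk_norm_rpow_log_norm_eq_zero (hx : x ≠ 0) (m : ℕ) {p : ℝ}
    (hp : p + Module.finrank ℝ E = 2 * (m + 1)) :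
    divk b (m + 1) (fun y => ‖y‖ ^ p) (fun y => log ‖y‖) x = 0 := by
  have hs : IsOpen ({0}ᶜ : Set E) := isOpen_compl_singleton
  induction m generalizing p with
  | zero =>
    rw [divk_succ_norm_rpow b contDiffOn_log_norm hx, divk_zero, divk_zero, divk_zero,
      laplacian_log_norm hx, euler_log_norm hx]
    have h1 := rpow_add (norm_pos_iff.2 hx) p (-2)
    push_cast at hp ⊢
    linear_combination (-(Module.finrank ℝ E - 2 : ℝ)) * h1 + ‖x‖ ^ (p - 2) * hp
  | succ m ih =>
    rw [divk_succ_norm_rpow b contDiffOn_log_norm hx,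
      divk_congr b hs (fun y hy => laplacian_log_norm hy) _ hx,
      divk_const_mul b hs (contDiffOn_norm_rpow p) (contDiffOn_norm_rpow (-2)) _ _ hx,
      divk_norm_rpow_norm_rpow_eq_zero b hx m (by push_cast at hp ⊢; linarith),
      divk_congr b hs (fun y hy => euler_log_norm hy) _ hx, divk_const b (by omega),
      ih (by push_cast at hp ⊢; linarith)]
    ring

end Divk

section Euclidean

variable {N : ℕ} {s : Set (EuclideanSpace ℝ (Fin N))} {f g : EuclideanSpace ℝ (Fin N) → ℝ}
  {x : EuclideanSpace ℝ (Fin N)}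

theorem pD_eq_iterDirDeriv (hs : IsOpen s) (hf : ContDiffOn ℝ ∞ f s) {k : ℕ} (i : Fin k → Fin N)
    (hx : x ∈ s) :
    pD k f i x = iterDirDeriv ((List.ofFn i).map (EuclideanSpace.basisFun (Fin N) ℝ)) f x := by
  rw [List.map_ofFn, ← iteratedFDeriv_eq_iterDirDeriv hs hf _ hx]
  simp [pD, Function.comp_def, EuclideanSpace.basisFun_apply]

theorem sum_pD_mul_pD_eq_divk (hs : IsOpen s) (hg : ContDiffOn ℝ ∞ g s)
    (hf : ContDiffOn ℝ ∞ f s) (k : ℕ) (hx : x ∈ s) :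
    ∑ i : Fin k → Fin N, pD k (fun z => g z * pD k f i z) i x
      = divk (EuclideanSpace.basisFun (Fin N) ℝ) k g f x := by
  refine Finset.sum_congr rfl fun i _ => ?_
  have heq : EqOn (fun z => g z * pD k f i z) (fun z => g z *
      iterDirDeriv ((List.ofFn i).map (EuclideanSpace.basisFun (Fin N) ℝ)) f z) s :=
    fun z hz => by simp only [pD_eq_iterDirDeriv hs hf i hz]
  rw [pD_eq_iterDirDeriv hs ((hg.mul (hf.iterDirDeriv hs _)).congr heq) i hx]
  exact iterDirDeriv_congr hs heq _ hx

end Euclidean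

theorem divk_log_vanishes_general (N k : ℕ) (hk1 : 1 ≤ k)
    (x : EuclideanSpace ℝ (Fin N)) (hx : x ≠ 0) :
    (-1 : ℝ) ^ k *
      ∑ i : Fin k → Fin N,
        pD k (fun z : EuclideanSpace ℝ (Fin N) =>
          ‖z‖ ^ (2 * (k : ℝ) - (N : ℝ)) *
            pD k (fun w : EuclideanSpace ℝ (Fin N) => Real.log ‖w‖) i z) i x
      = 0 := by
  obtain ⟨m, rfl⟩ : ∃ m, k = m + 1 := ⟨k - 1, by omega⟩
  rw [sum_pD_mul_pD_eq_divk isOpen_compl_singleton (contDiffOn_norm_rpow _) contDiffOn_log_norm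
      _ hx,
    divk_norm_rpow_log_norm_eq_zero _ hx m (by rw [finrank_euclideanSpace_fin]; push_cast; ring),
    mul_zero]

theorem divk_log_vanishes (N k : ℕ) (hN : 3 ≤ N) (hk1 : 1 ≤ k) (hkN : k ≤ N)
    (x : EuclideanSpace ℝ (Fin N)) (hx : x ≠ 0) :
    (-1 : ℝ) ^ k *
      ∑ i : Fin k → Fin N,
        pD k (fun z : EuclideanSpace ℝ (Fin N) =>
          ‖z‖ ^ (2 * (k : ℝ) - (N : ℝ)) *
            pD k (fun w : EuclideanSpace ℝ (Fin N) => Real.log ‖w‖) i z) i x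
      = 0 :=
  divk_log_vanishes_general N k hk1 x hx
end
end
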